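/- The coefficient matrix of the system x̃_{i,1} − Σ_{k<i} y_k ≤ 0, x̃_{i,2} − Σ_{k<i} y_k ≤ 0, Σ_{k≤i} y_k + z_i ≤ 1, x̃_{i,j} ≥ 0, y_i ≥ 0, z_i ≥ 0 (i ∈ [p], j ∈ [2]) is totally unimodular. -/

import Mathlib

noncomputable section

/-- The coefficient matrix of the system
`x̃_{i,1} - Σ_{k<i} y_k ≤ 0`, `x̃_{i,2} - Σ_{k<i} y_k ≤ 0`, `Σ_{k≤i} y_k + z_i ≤ 1`,
`-x̃_{i,j} ≤ 0`, `-y_i ≤ 0`, `-z_i ≤ 0` (rows), in the variables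
`x̃ ∈ ℝ^{p×2}`, `y ∈ ℝ^p`, `z ∈ ℝ^p` (columns). -/
def orbCoeffMatrix (p : ℕ) :
    Matrix ((Fin p ⊕ Fin p ⊕ Fin p) ⊕ ((Fin p × Fin 2) ⊕ Fin p ⊕ Fin p))
           ((Fin p × Fin 2) ⊕ Fin p ⊕ Fin p) ℝ :=
  fun r c =>
    match r, c with
    -- row of `x̃_{i,1} - Σ_{k<i} y_k ≤ 0`
    | .inl (.inl i), .inl (i', j) => if i' = i ∧ j = 0 then 1 else 0
    | .inl (.inl i), .inr (.inl k) => if k < i then -1 else 0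
    | .inl (.inl _), .inr (.inr _) => 0
    -- row of `x̃_{i,2} - Σ_{k<i} y_k ≤ 0`
    | .inl (.inr (.inl i)), .inl (i', j) => if i' = i ∧ j = 1 then 1 else 0
    | .inl (.inr (.inl i)), .inr (.inl k) => if k < i then -1 else 0
    | .inl (.inr (.inl _)), .inr (.inr _) => 0
    -- row of `Σ_{k≤i} y_k + z_i ≤ 1`
    | .inl (.inr (.inr _)), .inl _ => 0
    | .inl (.inr (.inr i)), .inr (.inl k) => if k ≤ i then 1 else 0
    | .inl (.inr (.inr i)), .inr (.inr k) => if k = i then 1 else 0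
    -- row of `x̃_{i,j} ≥ 0`
    | .inr (.inl (i, j)), .inl (i', j') => if i' = i ∧ j' = j then -1 else 0
    | .inr (.inl _), .inr _ => 0
    -- row of `y_i ≥ 0`
    | .inr (.inr (.inl _)), .inl _ => 0
    | .inr (.inr (.inl i)), .inr (.inl k) => if k = i then -1 else 0
    | .inr (.inr (.inl _)), .inr (.inr _) => 0
    -- row of `z_i ≥ 0`
    | .inr (.inr (.inr _)), .inl _ => 0
    | .inr (.inr (.inr _)), .inr (.inl _) => 0
    | .inr (.inr (.inr i)), .inr (.inr k) => if k = i then -1 else 0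

open Matrix

lemma signed_interval_det (k : ℕ) : ∀ (e : Fin k → ℝ) (l u c : Fin k → ℕ),
    (∀ i, e i = 1 ∨ e i = -1) →
    (Matrix.of fun i j : Fin k => e i * (if l i ≤ c j ∧ c j < u i then 1 else 0)).det
      ∈ Set.range SignType.cast := by
  induction k with
  | zero => exact fun e l u c he => ⟨1, by simp⟩
  | succ k ih =>
    intro e l u c he
    obtain ⟨j0, -, hj0⟩ := Finset.exists_min_image Finset.univ c ⟨0, Finset.mem_univ 0⟩
    by_cases hS : ∃ i, l i ≤ c j0 ∧ c j0 < u i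
    · obtain ⟨i0, hi0S, hi0min⟩ := Finset.exists_min_image
        (Finset.univ.filter fun i => l i ≤ c j0 ∧ c j0 < u i) u
        (by obtain ⟨i, hi⟩ := hS; exact ⟨i, by simpa using hi⟩)
      simp only [Finset.mem_filter, Finset.mem_univ, true_and] at hi0S hi0min
      set v : Fin (k+1) → ℝ := fun i =>
        if i ≠ i0 ∧ l i ≤ c j0 ∧ c j0 < u i then e i * e i0 else 0 with hv
      set l' : Fin (k+1) → ℕ := fun i =>
        if i ≠ i0 ∧ l i ≤ c j0 ∧ c j0 < u i then u i0 else l i with hl'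
      set M : Matrix (Fin (k+1)) (Fin (k+1)) ℝ :=
        Matrix.of (fun i j => e i * (if l i ≤ c j ∧ c j < u i then 1 else 0)) with hM
      set M' : Matrix (Fin (k+1)) (Fin (k+1)) ℝ :=
        Matrix.of (fun i j => e i * (if l' i ≤ c j ∧ c j < u i then 1 else 0)) with hM'
      have hee : ∀ i, e i * e i = 1 := fun i => by rcases he i with h | h <;> rw [h] <;> norm_num
      have hdet : M'.det = M.det := by
        have key : M' = (1 + replicateCol Unit (-v) * replicateRow Unit (Pi.single i0 (1:ℝ))) * M := by
          ext i j
          have hcj : c j0 ≤ c j := hj0 j (Finset.mem_univ j)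
          have expand : (((1 + replicateCol Unit (-v) * replicateRow Unit (Pi.single i0 (1:ℝ))) :
                Matrix (Fin (k+1)) (Fin (k+1)) ℝ) * M) i j
              = M i j - v i * M i0 j := by
            rw [Matrix.add_mul, Matrix.one_mul]
            simp [Matrix.mul_apply, Matrix.replicateCol_apply, Matrix.replicateRow_apply, Pi.single_apply,
              mul_ite, ite_mul, mul_one, mul_zero, zero_mul, Finset.sum_ite_eq',
              sub_eq_add_neg]
          rw [expand]
          by_cases hP : i ≠ i0 ∧ l i ≤ c j0 ∧ c j0 < u i
          · have hvv : v i = e i * e i0 := by rw [hv]; simp [hP]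
            have hll : l' i = u i0 := by rw [hl']; simp [hP]
            have hui : u i0 ≤ u i := hi0min i ⟨hP.2.1, hP.2.2⟩
            simp only [hM, hM', Matrix.of_apply, hvv, hll]
            have : (e i * e i0) * (e i0 * (if l i0 ≤ c j ∧ c j < u i0 then 1 else 0))
                = e i * (if l i0 ≤ c j ∧ c j < u i0 then 1 else 0) := by
              rw [← mul_assoc, mul_assoc (e i), hee i0, mul_one]
            rw [this, ← mul_sub]
            congr 1
            have h1 : l i ≤ c j := le_trans hP.2.1 hcj
            have h2 : l i0 ≤ c j := le_trans hi0S.1 hcj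
            have h3 : c j0 < u i0 := hi0S.2
            split_ifs
            all_goals try norm_num
            all_goals (exfalso; omega)
          · have hvv : v i = 0 := by rw [hv]; simp [hP]
            have hll : l' i = l i := by rw [hl']; simp [hP]
            simp [hM, hM', hvv, hll]
        rw [key, Matrix.det_mul, Matrix.det_one_add_replicateCol_mul_replicateRow]
        have hvi0 : v i0 = 0 := by rw [hv]; simp
        have : Pi.single i0 (1:ℝ) ⬝ᵥ (-v) = 0 := by
          simp [dotProduct, Pi.single_apply, ite_mul, Finset.sum_ite_eq', hvi0]
        rw [this, add_zero, one_mul]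
      have hcol : ∀ i, i ≠ i0 → M' i j0 = 0 := by
        intro i hi
        by_cases hP : l i ≤ c j0 ∧ c j0 < u i
        · have hll : l' i = u i0 := by rw [hl']; simp [hi, hP.1, hP.2]
          simp only [hM', Matrix.of_apply, hll]
          rw [if_neg (by push_neg; intro h; omega), mul_zero]
        · have hll : l' i = l i := by rw [hl']; simp [hP]
          simp only [hM', Matrix.of_apply, hll]
          rw [if_neg hP, mul_zero]
      have hdiag : M' i0 j0 = e i0 := by
        have hll : l' i0 = l i0 := by rw [hl']; simp
        simp only [hM', Matrix.of_apply, hll]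
        rw [if_pos hi0S, mul_one]
      have hexp := Matrix.det_succ_column M' j0
      rw [Finset.sum_eq_single i0 (fun i _ hi => by rw [hcol i hi]; ring)
        (fun h => absurd (Finset.mem_univ i0) h)] at hexp
      rw [← hdet, hexp, hdiag]
      have hminor : (M'.submatrix i0.succAbove j0.succAbove)
          = Matrix.of (fun i j : Fin k => (e ∘ i0.succAbove) i *
              (if (l' ∘ i0.succAbove) i ≤ (c ∘ j0.succAbove) j ∧
                  (c ∘ j0.succAbove) j < (u ∘ i0.succAbove) i then 1 else 0)) := by
        ext i j; rfl
      rw [hminor]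
      have hmem := ih (e ∘ i0.succAbove) (l' ∘ i0.succAbove) (u ∘ i0.succAbove)
        (c ∘ j0.succAbove) (fun i => he _)
      obtain ⟨s, hs⟩ := hmem
      have hone : ((1:ℝ)) ∈ Set.range SignType.cast := ⟨1, SignType.coe_one⟩
      have hnegone : ((-1:ℝ)) ∈ Set.range SignType.cast := ⟨-1, SignType.coe_neg_one⟩
      have hsign : ((-1:ℝ)) ^ ((i0:ℕ) + (j0:ℕ)) * e i0 ∈ Set.range SignType.cast := by
        rcases Nat.even_or_odd ((i0:ℕ) + (j0:ℕ)) with h | h <;>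
            rcases he i0 with h' | h' <;> rw [h']
        · rw [h.neg_one_pow, one_mul]; exact hone
        · rw [h.neg_one_pow, one_mul]; exact hnegone
        · rw [h.neg_one_pow, mul_one]; exact hnegone
        · rw [h.neg_one_pow, neg_mul_neg, one_mul]; exact hone
      obtain ⟨t, ht⟩ := hsign
      exact ⟨t * s, by rw [SignType.coe_mul, ht, hs]⟩
    · exact ⟨0, by
        symm
        apply Matrix.det_eq_zero_of_column_eq_zero j0
        intro i
        simp only [Matrix.of_apply]
        rw [if_neg (fun h => hS ⟨i, h⟩), mul_zero]⟩

def coreE (p : ℕ) : Fin p ⊕ Fin p ⊕ Fin p → ℝ :=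
  Sum.elim (fun _ => -1) (Sum.elim (fun _ => -1) (fun _ => 1))

def coreU (p : ℕ) : Fin p ⊕ Fin p ⊕ Fin p → ℕ :=
  Sum.elim (fun i => i) (Sum.elim (fun i => i) (fun i => i + 1))

def coreM (p : ℕ) : Matrix (Fin p ⊕ Fin p ⊕ Fin p) (Fin p) ℝ :=
  Matrix.of fun r k => coreE p r * (if (k : ℕ) < coreU p r then 1 else 0)

lemma coreM_isTotallyUnimodular (p : ℕ) : (coreM p).IsTotallyUnimodular := by
  rw [Matrix.isTotallyUnimodular_iff]
  intro k f g
  have h := signed_interval_det k (coreE p ∘ f) (fun _ => 0) (coreU p ∘ f)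
    (fun j => (g j : ℕ)) (fun i => by rcases hfi : f i with _ | _ | _ <;> simp [coreE, hfi])
  have heq : (coreM p).submatrix f g
      = Matrix.of fun i j : Fin k => (coreE p ∘ f) i *
          (if (fun _ : Fin k => 0) i ≤ (g j : ℕ) ∧ (g j : ℕ) < (coreU p ∘ f) i then 1 else 0) := by
    ext i j
    simp [coreM, Nat.zero_le]
  rw [heq]
  exact h

def fullM (p : ℕ) : Matrix ((Fin p ⊕ Fin p ⊕ Fin p) ⊕ (Fin p ⊕ (Fin p ⊕ Fin p ⊕ Fin p)))
    (Fin p ⊕ (Fin p ⊕ Fin p ⊕ Fin p)) ℝ :=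
  Matrix.fromRows (Matrix.fromCols (coreM p) 1) (-1)

lemma fullM_isTotallyUnimodular (p : ℕ) : (fullM p).IsTotallyUnimodular := by
  apply Matrix.IsTotallyUnimodular.fromRows_unitlike
  · rw [Matrix.fromCols_one_isTotallyUnimodular_iff]
    exact coreM_isTotallyUnimodular p
  · intro _ i
    refine ⟨i, SignType.neg, ?_⟩
    ext j
    by_cases h : j = i
    · subst h; simp [Pi.single_apply, Matrix.one_apply]
    · simp [Pi.single_apply, Matrix.one_apply, h, Ne.symm h]

def gcMap (p : ℕ) : (Fin p × Fin 2) ⊕ Fin p ⊕ Fin p → Fin p ⊕ (Fin p ⊕ Fin p ⊕ Fin p)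
  | .inl (i, j) => .inr (if j = 0 then .inl i else .inr (.inl i))
  | .inr (.inl k) => .inl k
  | .inr (.inr i) => .inr (.inr (.inr i))

def frMap (p : ℕ) : (Fin p ⊕ Fin p ⊕ Fin p) ⊕ ((Fin p × Fin 2) ⊕ Fin p ⊕ Fin p)
    → (Fin p ⊕ Fin p ⊕ Fin p) ⊕ (Fin p ⊕ (Fin p ⊕ Fin p ⊕ Fin p))
  | .inl r => .inl r
  | .inr c => .inr (gcMap p c)


/-- The coefficient matrix of the system describing `Q_p^{x̃,y,z}` is totally
unimodular. -/
theorem orbCoeffMatrix_isTotallyUnimodular (p : ℕ) :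
    (orbCoeffMatrix p).IsTotallyUnimodular := by
  have heq : orbCoeffMatrix p = (fullM p).submatrix (frMap p) (gcMap p) := by
    ext r c
    rcases r with (i | i | i) | (⟨i, j⟩ | i | i) <;>
      rcases c with ⟨i', j'⟩ | k | i' <;>
      (try fin_cases j') <;> (try fin_cases j) <;>
      simp [orbCoeffMatrix, fullM, frMap, gcMap, Matrix.one_apply,
        coreM, coreE, coreU] <;>
      (try (split_ifs <;> simp_all [Fin.lt_def, Fin.le_def, Nat.lt_succ_iff])) <;>
      (try (split_ifs <;> simp only [Fin.le_def, Fin.lt_def, not_le, not_lt] at * <;>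
        first | rfl | omega))
  rw [heq]
  exact (fullM_isTotallyUnimodular p).submatrix _ _

end
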